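/- arXiv:2304.14392 — 2 statements merged into one kernel-verified Lean document; each statement's English description precedes it below -/
import Mathlib

section
/- Let d ≥ 1 and let P and Q be complex polynomials with deg P ≤ d, deg Q ≤ d−1, P of parity d mod 2, Q of parity (d−1) mod 2, and |P(x)|² + (1−x²)·|Q(x)|² = 1 for all x ∈ [-1,1]. Then there exists a phase list Φ = (φ_0, …, φ_d) ∈ ℝ^{d+1} such that for all x ∈ [-1,1], U_Φ(x) equals the 2×2 matrix with top-left entry P(x), top-right entry i√(1−x²)·Q(x), bottom-left entry i√(1−x²)·conj(Q(x)), and bottom-right entry conj(P(x)). -/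
open Matrix Polynomial

/-- The single-qubit Z-rotation `Z(φ) = diag(e^{iφ}, e^{-iφ})`. -/
noncomputable def Zrot (φ : ℝ) : Matrix (Fin 2) (Fin 2) ℂ :=
  !![Complex.exp (Complex.I * (φ : ℂ)), 0; 0, Complex.exp (-(Complex.I * (φ : ℂ)))]

/-- The QSP signal oracle `W(x)`, with diagonal entries `x` and off-diagonal
entries `i·√(1-x²)`. -/
noncomputable def Wosc (x : ℝ) : Matrix (Fin 2) (Fin 2) ℂ :=
  !![(x : ℂ), Complex.I * (Real.sqrt (1 - x ^ 2) : ℂ);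
     Complex.I * (Real.sqrt (1 - x ^ 2) : ℂ), (x : ℂ)]

/-- The QSP unitary `U_Φ(x) = Z(φ₀)·W(x)·Z(φ₁)·W(x)·Z(φ₂)⋯W(x)·Z(φ_d)`. -/
noncomputable def qspU {d : ℕ} (Φ : Fin (d + 1) → ℝ) (x : ℝ) :
    Matrix (Fin 2) (Fin 2) ℂ :=
  Zrot (Φ 0) * (List.ofFn fun k : Fin d => Wosc x * Zrot (Φ k.succ)).prod

/-- The nested QSP unitary `(Φ1 ∘ Φ0)(x)`: the QSP circuit of `Φ1` with each
oracle `W(x)` replaced by `U_{Φ0}(x)`. -/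
noncomputable def nestedU {n m : ℕ} (Φ1 : Fin (m + 1) → ℝ) (Φ0 : Fin (n + 1) → ℝ)
    (x : ℝ) : Matrix (Fin 2) (Fin 2) ℂ :=
  Zrot (Φ1 0) * (List.ofFn fun k : Fin m => qspU Φ0 x * Zrot (Φ1 k.succ)).prod

/-- A phase list `Φ = (φ_0, …, φ_d)` is antisymmetric if `φ_k = -φ_{d-k}` for all `k`. -/
def Antisym {d : ℕ} (Φ : Fin (d + 1) → ℝ) : Prop := ∀ k, Φ (Fin.rev k) = -Φ k

/-- A polynomial has parity `m mod 2` if only monomials of degree congruent to `m`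
modulo 2 have nonzero coefficients. -/
def HasParity {R : Type*} [Semiring R] (m : ℕ) (P : Polynomial R) : Prop :=
  ∀ k, k % 2 ≠ m % 2 → P.coeff k = 0

/-!
Peel off the last factor `W(x) Z(φ)`. Read as a polynomial identity,
`P P̄ + (1 - X²) Q Q̄ = 1` forces `|p_d| = |q_{d-1}|` on the top coefficients (compare the
coefficients of `X^{2d}`), so some phase `φ` satisfies `e^{-iφ} p_d = e^{iφ} q_{d-1}`. For this
`φ`, the QSP matrix of `(P, Q)` times `(W(x) Z(φ))⁻¹` is the QSP matrix of the explicit pair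
`(e^{-iφ} X P + e^{iφ} (1 - X²) Q, e^{iφ} X Q - e^{-iφ} P)`, whose top coefficients cancel
exactly by the choice of `φ`; it has the right parities and again satisfies the identity.
Induction on `d` ends at `d = 0`, where `P` is a unimodular constant `e^{iφ₀}` and `Q = 0`.
-/

open Complex ComplexConjugate

section Parity

variable {R : Type*} [Semiring R] {m n : ℕ} {P Q : R[X]}

namespace HasParity

theorem of_mod_two_eq (h : HasParity m P) (hmn : m % 2 = n % 2) : HasParity n P :=
  fun k hk => h k (hmn ▸ hk)

theorem add (hP : HasParity m P) (hQ : HasParity m Q) : HasParity m (P + Q) := fun k hk => by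
  rw [coeff_add, hP k hk, hQ k hk, add_zero]

theorem mul (hP : HasParity m P) (hQ : HasParity n Q) : HasParity (m + n) (P * Q) := by
  intro k hk
  rw [coeff_mul]
  refine Finset.sum_eq_zero fun ij hij => ?_
  rw [Finset.HasAntidiagonal.mem_antidiagonal] at hij
  by_cases hi : ij.1 % 2 = m % 2
  · rw [hQ ij.2 (by omega), mul_zero]
  · rw [hP ij.1 hi, zero_mul]

theorem degree_lt (h : HasParity m P) (hdeg : P.degree < ↑(n + 1)) (hmn : n % 2 ≠ m % 2) :
    P.degree < n := by
  rw [degree_lt_iff_coeff_zero] at hdeg ⊢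
  intro k hk
  rcases hk.eq_or_lt with rfl | hlt
  exacts [h _ hmn, hdeg k hlt]

end HasParity

theorem HasParity.sub {R : Type*} [Ring R] {m : ℕ} {P Q : R[X]} (hP : HasParity m P)
    (hQ : HasParity m Q) : HasParity m (P - Q) := fun k hk => by
  rw [coeff_sub, hP k hk, hQ k hk, sub_zero]

theorem hasParity_C (a : R) : HasParity 0 (C a) := fun k hk => by
  rw [coeff_C, if_neg (by omega)]

theorem hasParity_one : HasParity 0 (1 : R[X]) := fun k hk => by
  rw [coeff_one, if_neg (by omega)]

theorem hasParity_X : HasParity 1 (X : R[X]) := fun k hk => by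
  rw [coeff_X, if_neg (by omega)]

theorem hasParity_X_pow (n : ℕ) : HasParity n (X ^ n : R[X]) := fun k hk => by
  rw [coeff_X_pow, if_neg (by omega)]

end Parity

theorem exp_mul_exp_neg (z : ℂ) : exp z * exp (-z) = 1 := by
  rw [← exp_add, add_neg_cancel, exp_zero]

theorem conj_exp_I_mul_ofReal (φ : ℝ) : conj (exp (I * φ)) = exp (-(I * φ)) := by
  rw [← exp_conj, map_mul, conj_I, conj_ofReal, neg_mul]

theorem conj_exp_neg_I_mul_ofReal (φ : ℝ) : conj (exp (-(I * φ))) = exp (I * φ) := by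
  rw [← conj_exp_I_mul_ofReal, conj_conj]

theorem exists_exp_neg_mul_eq_exp_mul {p q : ℂ} (h : ‖p‖ = ‖q‖) :
    ∃ φ : ℝ, exp (-(I * φ)) * p = exp (I * φ) * q := by
  refine ⟨(arg p - arg q) / 2, ?_⟩
  have hp := norm_mul_exp_arg_mul_I p
  have hq := norm_mul_exp_arg_mul_I q
  generalize arg p = a at hp ⊢
  generalize arg q = b at hq ⊢
  rw [← hq, ← hp, h, mul_left_comm, mul_left_comm (exp _), ← exp_add, ← exp_add]
  congr 2
  push_cast
  ring

theorem ofReal_sqrt_one_sub_sq_sq {x : ℝ} (hx : x ∈ Set.Icc (-1 : ℝ) 1) :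
    ((Real.sqrt (1 - x ^ 2) : ℝ) : ℂ) ^ 2 = 1 - (x : ℂ) ^ 2 := by
  rw [← ofReal_pow, Real.sq_sqrt (by nlinarith [hx.1, hx.2])]
  push_cast; ring

theorem eval_map_conj_ofReal (P : ℂ[X]) (x : ℝ) :
    (P.map (starRingEnd ℂ)).eval (x : ℂ) = conj (P.eval (x : ℂ)) := by
  rw [eval_map, ← eval₂_at_apply, conj_ofReal]

def IsUnitaryPair (P Q : ℂ[X]) : Prop :=
  P * P.map (starRingEnd ℂ) + (1 - X ^ 2) * (Q * Q.map (starRingEnd ℂ)) = 1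

theorem isUnitaryPair_of_forall_Icc {P Q : ℂ[X]}
    (h : ∀ x ∈ Set.Icc (-1 : ℝ) 1,
      normSq (P.eval (x : ℂ)) + (1 - x ^ 2) * normSq (Q.eval (x : ℂ)) = 1) :
    IsUnitaryPair P Q := by
  refine eq_of_infinite_eval_eq _ _ (((Set.Icc_infinite (by norm_num : (-1 : ℝ) < 1)).image
    ofReal_injective.injOn).mono ?_)
  rintro _ ⟨x, hx, rfl⟩
  have hx' := congrArg ((↑) : ℝ → ℂ) (h x hx)
  push_cast at hx'
  simp only [Set.mem_ofPred_eq, eval_add, eval_mul, eval_sub, eval_one, eval_pow, eval_X,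
    eval_map_conj_ofReal, mul_conj]
  exact hx'

theorem IsUnitaryPair.norm_coeff_eq {P Q : ℂ[X]} {m : ℕ} (h : IsUnitaryPair P Q)
    (hP : P.degree < ↑(m + 2)) (hQ : Q.degree < ↑(m + 1)) :
    ‖P.coeff (m + 1)‖ = ‖Q.coeff m‖ := by
  have hPn : P.natDegree ≤ m + 1 := natDegree_le_of_degree_le (Order.le_of_lt_succ hP)
  have hQn : Q.natDegree ≤ m := natDegree_le_of_degree_le (Order.le_of_lt_succ hQ)
  have hPn' : (P.map (starRingEnd ℂ)).natDegree ≤ m + 1 := natDegree_map_le.trans hPn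
  have hQn' : (Q.map (starRingEnd ℂ)).natDegree ≤ m := natDegree_map_le.trans hQn
  have hPP := coeff_mul_add_eq_of_natDegree_le hPn hPn'
  have hQQ := coeff_mul_add_eq_of_natDegree_le hQn hQn'
  have hQQ' : (Q * Q.map (starRingEnd ℂ)).coeff (m + 1 + (m + 1)) = 0 :=
    coeff_eq_zero_of_natDegree_lt (natDegree_mul_le.trans_lt (by omega))
  have htop := congrArg (coeff · (m + 1 + (m + 1))) h
  rw [show m + 1 + (m + 1) = m + m + 2 by ring] at htop hPP hQQ'
  simp only [coeff_add, sub_mul, one_mul, coeff_sub, coeff_X_pow_mul, coeff_one, hPP, hQQ, hQQ',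
    coeff_map, mul_conj, if_neg (show m + m + 2 ≠ 0 by omega)] at htop
  have hnormSq : (normSq (P.coeff (m + 1)) : ℂ) = normSq (Q.coeff m) := by
    linear_combination htop
  rw [Complex.norm_def, Complex.norm_def, (by exact_mod_cast hnormSq :
    normSq (P.coeff (m + 1)) = normSq (Q.coeff m))]

noncomputable def peelP (φ : ℝ) (P Q : ℂ[X]) : ℂ[X] :=
  C (exp (-(I * φ))) * X * P + C (exp (I * φ)) * (1 - X ^ 2) * Q

noncomputable def peelQ (φ : ℝ) (P Q : ℂ[X]) : ℂ[X] :=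
  C (exp (I * φ)) * X * Q - C (exp (-(I * φ))) * P

theorem coeff_peelP_add_two (φ : ℝ) (P Q : ℂ[X]) (k : ℕ) :
    (peelP φ P Q).coeff (k + 2) =
      exp (-(I * φ)) * P.coeff (k + 1) + exp (I * φ) * (Q.coeff (k + 2) - Q.coeff k) := by
  simp only [peelP, mul_assoc, coeff_add, coeff_C_mul, coeff_X_mul, sub_mul, one_mul, coeff_sub,
    coeff_X_pow_mul]

theorem coeff_peelQ_add_one (φ : ℝ) (P Q : ℂ[X]) (k : ℕ) :
    (peelQ φ P Q).coeff (k + 1) =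
      exp (I * φ) * Q.coeff k - exp (-(I * φ)) * P.coeff (k + 1) := by
  simp only [peelQ, mul_assoc, coeff_sub, coeff_C_mul, coeff_X_mul]

theorem degree_peelP_lt {φ : ℝ} {P Q : ℂ[X]} {m : ℕ} (hP : P.degree < ↑(m + 2))
    (hQ : Q.degree < ↑(m + 1))
    (htop : exp (-(I * φ)) * P.coeff (m + 1) = exp (I * φ) * Q.coeff m) :
    (peelP φ P Q).degree < ↑(m + 2) := by
  rw [degree_lt_iff_coeff_zero] at *
  intro k hk
  obtain ⟨j, rfl⟩ : ∃ j, k = j + 2 := ⟨k - 2, by omega⟩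
  rw [coeff_peelP_add_two, hQ (j + 2) (by omega)]
  rcases (show m ≤ j by omega).eq_or_lt with rfl | hj
  · rw [htop]; ring
  · rw [hP (j + 1) (by omega), hQ j hj]; ring

theorem degree_peelQ_lt {φ : ℝ} {P Q : ℂ[X]} {m : ℕ} (hP : P.degree < ↑(m + 2))
    (hQ : Q.degree < ↑(m + 1))
    (htop : exp (-(I * φ)) * P.coeff (m + 1) = exp (I * φ) * Q.coeff m) :
    (peelQ φ P Q).degree < ↑(m + 1) := by
  rw [degree_lt_iff_coeff_zero] at *
  intro k hk
  obtain ⟨j, rfl⟩ : ∃ j, k = j + 1 := ⟨k - 1, by omega⟩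
  rcases (show m ≤ j by omega).eq_or_lt with rfl | hj
  · rw [coeff_peelQ_add_one, htop, sub_self]
  · rw [coeff_peelQ_add_one, hP (j + 1) (by omega), hQ j hj]; ring

theorem hasParity_peelP {P Q : ℂ[X]} {n : ℕ} (hP : HasParity (n + 1) P) (hQ : HasParity n Q)
    (φ : ℝ) : HasParity n (peelP φ P Q) := by
  have h1 : HasParity 0 (1 - X ^ 2 : ℂ[X]) :=
    hasParity_one.sub ((hasParity_X_pow 2).of_mod_two_eq rfl)
  exact ((((hasParity_C _).mul hasParity_X).mul hP).of_mod_two_eq (by omega)).add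
    ((((hasParity_C _).mul h1).mul hQ).of_mod_two_eq (by omega))

theorem hasParity_peelQ {P Q : ℂ[X]} {n : ℕ} (hP : HasParity (n + 1) P) (hQ : HasParity n Q)
    (φ : ℝ) : HasParity (n + 1) (peelQ φ P Q) :=
  ((((hasParity_C _).mul hasParity_X).mul hQ).of_mod_two_eq (by omega)).sub
    (((hasParity_C _).mul hP).of_mod_two_eq (by omega))

theorem IsUnitaryPair.peel {P Q : ℂ[X]} (h : IsUnitaryPair P Q) (φ : ℝ) :
    IsUnitaryPair (peelP φ P Q) (peelQ φ P Q) := by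
  have hC : C (exp (I * φ)) * C (exp (-(I * φ))) = 1 := by
    rw [← C_mul, exp_mul_exp_neg, C_1]
  unfold IsUnitaryPair peelP peelQ at *
  simp only [Polynomial.map_add, Polynomial.map_sub, Polynomial.map_mul, Polynomial.map_pow,
    map_C, map_X, Polynomial.map_one, conj_exp_I_mul_ofReal, conj_exp_neg_I_mul_ofReal]
  linear_combination (C (exp (I * φ)) * C (exp (-(I * φ)))) * h + hC

noncomputable def qspMatrix (P Q : ℂ[X]) (x : ℝ) : Matrix (Fin 2) (Fin 2) ℂ :=
  !![P.eval (x : ℂ), I * (Real.sqrt (1 - x ^ 2) : ℂ) * Q.eval (x : ℂ);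
     I * (Real.sqrt (1 - x ^ 2) : ℂ) * conj (Q.eval (x : ℂ)), conj (P.eval (x : ℂ))]

theorem qspMatrix_peel_mul (φ : ℝ) (P Q : ℂ[X]) {x : ℝ} (hx : x ∈ Set.Icc (-1 : ℝ) 1) :
    qspMatrix (peelP φ P Q) (peelQ φ P Q) x * (Wosc x * Zrot φ) = qspMatrix P Q x := by
  have hs := ofReal_sqrt_one_sub_sq_sq hx
  have hc := exp_mul_exp_neg (I * φ)
  simp only [qspMatrix, peelP, peelQ, Wosc, Zrot, eval_add, eval_sub, eval_mul, eval_C, eval_X,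
    eval_pow, eval_one, map_add, map_sub, map_mul, map_pow, map_one, conj_ofReal,
    conj_exp_I_mul_ofReal, conj_exp_neg_I_mul_ofReal]
  generalize exp (I * φ) = c at hc ⊢
  generalize exp (-(I * φ)) = c' at hc ⊢
  generalize ((Real.sqrt (1 - x ^ 2) : ℝ) : ℂ) = s at hs ⊢
  generalize P.eval (x : ℂ) = p
  generalize Q.eval (x : ℂ) = q
  rw [mul_fin_two, mul_fin_two]
  simp only [EmbeddingLike.apply_eq_iff_eq, vecCons_inj, and_true]
  refine ⟨⟨?_, ?_⟩, ?_, ?_⟩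
  · linear_combination p * hc + s ^ 2 * (c ^ 2 * x * q - c * c' * p) * I_sq -
      (c ^ 2 * x * q - c * c' * p) * hs
  · linear_combination I * s * q * hc
  · linear_combination I * s * conj q * hc
  · linear_combination conj p * hc + s ^ 2 * (c' ^ 2 * x * conj q - c * c' * conj p) * I_sq -
      (c' ^ 2 * x * conj q - c * c' * conj p) * hs

theorem qspU_snoc {d : ℕ} (Φ : Fin (d + 1) → ℝ) (φ : ℝ) (x : ℝ) :
    qspU (Fin.snoc Φ φ) x = qspU Φ x * (Wosc x * Zrot φ) := by
  simp only [qspU, List.ofFn_succ', List.concat_eq_append, List.prod_append, List.prod_cons,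
    List.prod_nil, Fin.succ_last, Fin.snoc_last, mul_one, Fin.succ_castSucc, Fin.snoc_castSucc,
    ← Fin.castSucc_zero, mul_assoc]

theorem exists_qspU_eq_qspMatrix_zero {P Q : ℂ[X]} (hP : P.degree < ↑(0 + 1))
    (hQ : Q.degree < ↑0) (h : IsUnitaryPair P Q) :
    ∃ Φ : Fin 1 → ℝ, ∀ x, qspU Φ x = qspMatrix P Q x := by
  have hQ0 : Q = 0 := by simpa using hQ
  have hPC : P = C (P.coeff 0) := eq_C_of_degree_le_zero (Order.le_of_lt_succ hP)
  set a := P.coeff 0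
  have ha : ‖a‖ = 1 := by
    rw [IsUnitaryPair, hQ0, hPC] at h
    simp only [map_C, Polynomial.map_zero, mul_zero, add_zero] at h
    rw [← C_mul, ← C_1, C_inj, mul_conj] at h
    rw [Complex.norm_def, (by exact_mod_cast h : normSq a = 1), Real.sqrt_one]
  have hexp : exp (I * arg a) = a := by
    simpa [ha, mul_comm] using norm_mul_exp_arg_mul_I a
  have hexp' : exp (-(I * arg a)) = conj a := by
    rw [Complex.exp_neg, hexp, inv_eq_conj ha]
  refine ⟨fun _ => arg a, fun x => ?_⟩
  simp [qspU, Zrot, qspMatrix, hQ0, hPC, hexp, hexp']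

-- `Q.degree < d` and parity `d + 1` encode `deg Q ≤ d - 1` and parity `d - 1` without the
-- truncated subtraction `0 - 1 = 0`.
theorem exists_qspU_eq_qspMatrix :
    ∀ (d : ℕ) {P Q : ℂ[X]}, P.degree < ↑(d + 1) → Q.degree < ↑d → HasParity d P →
    HasParity (d + 1) Q → IsUnitaryPair P Q →
    ∃ Φ : Fin (d + 1) → ℝ, ∀ x ∈ Set.Icc (-1 : ℝ) 1, qspU Φ x = qspMatrix P Q x
  | 0, _, _, hP, hQ, _, _, h =>
    (exists_qspU_eq_qspMatrix_zero hP hQ h).imp fun _ hΦ x _ => hΦ x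
  | m + 1, P, Q, hP, hQ, hPpar, hQpar, h => by
    obtain ⟨φ, hφ⟩ := exists_exp_neg_mul_eq_exp_mul (h.norm_coeff_eq hP hQ)
    have hQpar' : HasParity m Q := hQpar.of_mod_two_eq (by omega)
    obtain ⟨Φ, hΦ⟩ := exists_qspU_eq_qspMatrix m
      ((hasParity_peelP hPpar hQpar' φ).degree_lt (degree_peelP_lt hP hQ hφ) (by omega))
      ((hasParity_peelQ hPpar hQpar' φ).degree_lt (degree_peelQ_lt hP hQ hφ) (by omega))
      (hasParity_peelP hPpar hQpar' φ) (hasParity_peelQ hPpar hQpar' φ) (h.peel φ)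
    refine ⟨Fin.snoc Φ φ, fun x hx => ?_⟩
    rw [qspU_snoc, hΦ x hx, qspMatrix_peel_mul φ P Q hx]

/-- converse direction of QSP: every pair of polynomials
`(P, Q)` with the stated degrees, parities and norm condition is realized by
some QSP phase list. -/
theorem qsp_converse (d : ℕ) (hd : 1 ≤ d) (P Q : Polynomial ℂ)
    (hPdeg : P.degree ≤ (d : WithBot ℕ))
    (hQdeg : Q.degree ≤ ((d - 1 : ℕ) : WithBot ℕ))
    (hPpar : HasParity d P) (hQpar : HasParity (d - 1) Q)
    (hnorm : ∀ x ∈ Set.Icc (-1 : ℝ) 1,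
      Complex.normSq (P.eval (x : ℂ)) +
        (1 - x ^ 2) * Complex.normSq (Q.eval (x : ℂ)) = 1) :
    ∃ Φ : Fin (d + 1) → ℝ,
      ∀ x ∈ Set.Icc (-1 : ℝ) 1,
        qspU Φ x =
          !![P.eval (x : ℂ),
             Complex.I * (Real.sqrt (1 - x ^ 2) : ℂ) * Q.eval (x : ℂ);
             Complex.I * (Real.sqrt (1 - x ^ 2) : ℂ) *
               (starRingEnd ℂ) (Q.eval (x : ℂ)),
             (starRingEnd ℂ) (P.eval (x : ℂ))] := by
  obtain ⟨k, rfl⟩ : ∃ k, d = k + 1 := ⟨d - 1, by omega⟩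
  rw [Nat.add_sub_cancel] at hQdeg hQpar
  exact exists_qspU_eq_qspMatrix (k + 1) (Order.lt_succ_of_le hPdeg) (Order.lt_succ_of_le hQdeg)
    hPpar (hQpar.of_mod_two_eq (by omega)) (isUnitaryPair_of_forall_Icc hnorm)
end

section
/- Let Φ ∈ ℝ^{d+1} be an antisymmetric phase list, let P be the real polynomial such that both diagonal entries of U_Φ(x) equal P(x) for all x ∈ [-1,1], and let x ∈ (−1,1) be such that |P(x)| < 1. Then there exists θ ∈ ℝ such that U_Φ(x) = Z(θ)·W(P(x))·Z(−θ); that is, at each such argument the antisymmetric QSP unitary is a twisted oracle encoding the signal P(x). -/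
/-! Every QSP unitary lies in `SU(2)`, and a matrix in `SU(2)` has the form
`!![a, b; -conj b, conj a]` with `‖a‖² + ‖b‖² = 1`. When `a = p` is real,
`‖b‖ = √(1 - p²)`, so `b = i √(1 - p²) e^{2iθ}` for `θ = (arg b - π/2) / 2`, and this is
exactly the first row of `Z(θ) W(p) Z(-θ)`. -/

open Matrix Polynomial

open ComplexConjugate

theorem Matrix.mem_specialUnitaryGroup_fin_two_of {a b : ℂ} (h : ‖a‖ ^ 2 + ‖b‖ ^ 2 = 1) :
    !![a, b; -conj b, conj a] ∈ specialUnitaryGroup (Fin 2) ℂ := by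
  have h' : a * conj a + b * conj b = 1 := by
    simp only [Complex.mul_conj, ← Complex.sq_norm]; exact_mod_cast h
  refine mem_specialUnitaryGroup_iff.2 ⟨mem_unitaryGroup_iff.2 ?_, ?_⟩
  · ext i j
    fin_cases i <;> fin_cases j <;> simp [mul_apply, Fin.sum_univ_two] <;>
      first | ring1 | linear_combination h'
  · simp only [det_fin_two_of]; linear_combination h'

theorem Matrix.eq_of_mem_specialUnitaryGroup_fin_two {M : Matrix (Fin 2) (Fin 2) ℂ}
    (hM : M ∈ specialUnitaryGroup (Fin 2) ℂ) :
    M = !![M 0 0, M 0 1; -conj (M 0 1), conj (M 0 0)] := by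
  obtain ⟨hU, hdet⟩ := mem_specialUnitaryGroup_iff.1 hM
  have h : star M = adjugate M := by
    rw [← inv_eq_left_inv (mem_unitaryGroup_iff'.1 hU), inv_def, hdet]
    simp
  have h00 : conj (M 0 0) = M 1 1 := by simpa [adjugate_fin_two] using congrFun₂ h 0 0
  have h10 : M 1 0 = -conj (M 0 1) := by
    simpa [adjugate_fin_two] using congrArg conj (congrFun₂ h 0 1)
  ext i j; fin_cases i <;> fin_cases j <;> simp [h00, h10]

theorem Matrix.norm_sq_add_norm_sq_of_mem_specialUnitaryGroup_fin_two
    {M : Matrix (Fin 2) (Fin 2) ℂ} (hM : M ∈ specialUnitaryGroup (Fin 2) ℂ) :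
    ‖M 0 0‖ ^ 2 + ‖M 0 1‖ ^ 2 = 1 := by
  have hdet := (mem_specialUnitaryGroup_iff.1 hM).2
  rw [eq_of_mem_specialUnitaryGroup_fin_two hM, det_fin_two_of] at hdet
  simp only [mul_neg, sub_neg_eq_add, Complex.mul_conj, ← Complex.sq_norm] at hdet
  exact_mod_cast hdet

theorem Zrot_mem_specialUnitaryGroup (φ : ℝ) : Zrot φ ∈ specialUnitaryGroup (Fin 2) ℂ := by
  have hZrot : Zrot φ = !![Complex.exp (Complex.I * φ), 0;
      -conj 0, conj (Complex.exp (Complex.I * φ))] := by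
    simp [Zrot, ← Complex.exp_conj]
  rw [hZrot]
  exact mem_specialUnitaryGroup_fin_two_of (by simp [Complex.norm_exp_I_mul_ofReal])

theorem Wosc_mem_specialUnitaryGroup {x : ℝ} (hx : x ∈ Set.Icc (-1 : ℝ) 1) :
    Wosc x ∈ specialUnitaryGroup (Fin 2) ℂ := by
  have hWosc : Wosc x = !![(x : ℂ), Complex.I * √(1 - x ^ 2);
      -conj (Complex.I * √(1 - x ^ 2)), conj (x : ℂ)] := by
    simp [Wosc]
  rw [hWosc]
  refine mem_specialUnitaryGroup_fin_two_of ?_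
  rw [norm_mul, Complex.norm_I, one_mul, Complex.norm_real, Complex.norm_real, Real.norm_eq_abs,
    Real.norm_eq_abs, sq_abs, sq_abs, Real.sq_sqrt (by nlinarith [hx.1, hx.2])]
  ring

theorem qspU_mem_specialUnitaryGroup {d : ℕ} (Φ : Fin (d + 1) → ℝ) {x : ℝ}
    (hx : x ∈ Set.Icc (-1 : ℝ) 1) : qspU Φ x ∈ specialUnitaryGroup (Fin 2) ℂ := by
  refine mul_mem (Zrot_mem_specialUnitaryGroup _) (Submonoid.list_prod_mem _ ?_)
  simp only [List.forall_mem_ofFn_iff]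
  exact fun k => mul_mem (Wosc_mem_specialUnitaryGroup hx) (Zrot_mem_specialUnitaryGroup _)

open Complex in
theorem Zrot_mul_Wosc_mul_Zrot_neg (θ p : ℝ) :
    Zrot θ * Wosc p * Zrot (-θ) =
      !![(p : ℂ), I * √(1 - p ^ 2) * exp (2 * θ * I);
        -conj (I * √(1 - p ^ 2) * exp (2 * θ * I)), conj (p : ℂ)] := by
  have hinv : exp (I * θ) * exp (-(I * θ)) = 1 := by rw [← exp_add, add_neg_cancel, exp_zero]
  have hsq : exp (2 * θ * I) = exp (I * θ) * exp (I * θ) := by rw [← exp_add]; ring_nf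
  ext i j
  fin_cases i <;> fin_cases j <;>
    simp [Zrot, Wosc, mul_apply, Fin.sum_univ_two, hsq, ← exp_conj, conj_ofReal] <;>
    first | ring1 | linear_combination (p : ℂ) * hinv

open Complex in
theorem exists_eq_Zrot_mul_Wosc_mul_Zrot_neg {M : Matrix (Fin 2) (Fin 2) ℂ}
    (hM : M ∈ specialUnitaryGroup (Fin 2) ℂ) {p : ℝ} (hp : M 0 0 = p) :
    ∃ θ : ℝ, M = Zrot θ * Wosc p * Zrot (-θ) := by
  have hnorm : ‖M 0 1‖ = √(1 - p ^ 2) := by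
    have h := norm_sq_add_norm_sq_of_mem_specialUnitaryGroup_fin_two hM
    rw [hp, norm_real, Real.norm_eq_abs, sq_abs] at h
    rw [← h, add_sub_cancel_left, Real.sqrt_sq (norm_nonneg _)]
  set θ : ℝ := (arg (M 0 1) - Real.pi / 2) / 2
  refine ⟨θ, ?_⟩
  have hexp : exp (2 * θ * I) = exp (arg (M 0 1) * I) * -I := by
    rw [← exp_neg_pi_div_two_mul_I, ← exp_add]; push_cast [θ]; ring_nf
  have hb : M 0 1 = I * √(1 - p ^ 2) * exp (2 * θ * I) := by
    rw [hexp, ← hnorm]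
    linear_combination (norm_mul_exp_arg_mul_I (M 0 1)).symm +
      ‖M 0 1‖ * exp (arg (M 0 1) * I) * I_sq
  rw [Zrot_mul_Wosc_mul_Zrot_neg, ← hb, ← hp]
  exact eq_of_mem_specialUnitaryGroup_fin_two hM

theorem antisym_qsp_is_twisted_oracle_general (d : ℕ) (Φ : Fin (d + 1) → ℝ)
    (P : Polynomial ℝ)
    (hP : ∀ y ∈ Set.Icc (-1 : ℝ) 1,
      (qspU Φ y) 0 0 = ((P.eval y : ℝ) : ℂ) ∧
      (qspU Φ y) 1 1 = ((P.eval y : ℝ) : ℂ))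
    (x : ℝ) (hx : x ∈ Set.Ioo (-1 : ℝ) 1) :
    ∃ θ : ℝ, qspU Φ x = Zrot θ * Wosc (P.eval x) * Zrot (-θ) :=
  exists_eq_Zrot_mul_Wosc_mul_Zrot_neg
    (qspU_mem_specialUnitaryGroup Φ (Set.Ioo_subset_Icc_self hx))
    (hP x (Set.Ioo_subset_Icc_self hx)).1

/-- At any argument `x ∈ (-1,1)` with `|P(x)| < 1`, an
antisymmetric QSP unitary is a twisted oracle encoding the signal `P(x)`:
`U_Φ(x) = Z(θ)·W(P(x))·Z(-θ)` for some `θ`. -/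
theorem antisym_qsp_is_twisted_oracle (d : ℕ) (Φ : Fin (d + 1) → ℝ)
    (hΦ : Antisym Φ) (P : Polynomial ℝ)
    (hP : ∀ y ∈ Set.Icc (-1 : ℝ) 1,
      (qspU Φ y) 0 0 = ((P.eval y : ℝ) : ℂ) ∧
      (qspU Φ y) 1 1 = ((P.eval y : ℝ) : ℂ))
    (x : ℝ) (hx : x ∈ Set.Ioo (-1 : ℝ) 1) (hPx : |P.eval x| < 1) :
    ∃ θ : ℝ, qspU Φ x = Zrot θ * Wosc (P.eval x) * Zrot (-θ) :=
  antisym_qsp_is_twisted_oracle_general d Φ P hP x hx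
end
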